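/- (Valid synthesis problem.) Let f be the output of TransformCtoT on a multilevel clustering with local buses over finite index sets I (plants) and J (requirements), with domain mapping relation PR ⊆ I × J. Then every node of the output tree represents a valid synthesis problem: for every node n, if the synthesis subproblem f(n) = (P, R') contains a requirement index r ∈ R', then every plant index i with PR(i,r) belongs to P. -/

import Mathlib

attribute [local instance] Classical.propDecidable

/-- A multilevel clustering with local buses: each node carries an element set `A`
(indices of plant components), a list `B` of bus children, a list `M` of non-bus
children, and a requirement index set `R`. -/
inductive MLC (I J : Type) : Type where
  | mk : Finset I → List (MLC I J) → List (MLC I J) → Finset J → MLC I J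

namespace MLC

variable {I J : Type}

/-- The element set `A(n)` of a node. -/
def elems : MLC I J → Finset I | mk A _ _ _ => A
/-- The bus children `B(n)` of a node. -/
def busCh : MLC I J → List (MLC I J) | mk _ B _ _ => B
/-- The non-bus children `M(n)` of a node. -/
def nonbusCh : MLC I J → List (MLC I J) | mk _ _ M _ => M
/-- The requirement index set `R(n)` of a node. -/
def reqs : MLC I J → Finset J | mk _ _ _ R => R
/-- All children `B(n) ∪ M(n)` of a node. -/
def children (t : MLC I J) : List (MLC I J) := t.busCh ++ t.nonbusCh
/-- Replace the requirement set carried by a node. -/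
def setReqs : MLC I J → Finset J → MLC I J | mk A B M _, R' => mk A B M R'

/-- Well-formedness of a multilevel clustering with local buses: a leaf has a
singleton element set and no children; an internal node has at least two children,
whose element sets are nonempty, pairwise disjoint and whose union is the node's
element set. -/
inductive WF : MLC I J → Prop where
  | leaf : ∀ (A : Finset I) (R : Finset J), A.card = 1 → WF (mk A [] [] R)
  | node : ∀ (A : Finset I) (B M : List (MLC I J)) (R : Finset J),
      2 ≤ (B ++ M).length →
      (∀ c ∈ B ++ M, (elems c).Nonempty) →
      (B ++ M).Pairwise (fun c d => Disjoint (elems c) (elems d)) →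
      ((B ++ M).map elems).foldr (· ∪ ·) ∅ = A →
      (∀ c ∈ B ++ M, WF c) →
      WF (mk A B M R)

end MLC

variable {I J : Type}

/-- Requirement `r` is related to cluster `c`: some plant index in the element set of
`c` is involved in `r` according to the domain mapping matrix `PR`. -/
def rel (PR : I → J → Prop) (r : J) (c : MLC I J) : Prop := ∃ p ∈ c.elems, PR p r

/-- The sublist of clusters of `cs` related to requirement `r`. -/
noncomputable def relF (PR : I → J → Prop) (r : J) (cs : List (MLC I J)) :
    List (MLC I J) :=
  cs.filter fun c => decide (rel PR r c)

/-- The requirements of `R` that stay at a node with bus children `B` and non-bus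
children `M`: those for which neither exactly one non-bus child is related, nor
(no non-bus child and exactly one bus child is related). -/
noncomputable def stayReqs (PR : I → J → Prop) (B M : List (MLC I J)) (R : Finset J) :
    Finset J :=
  R.filter fun r =>
    ¬ (relF PR r M).length = 1 ∧ ¬ ((relF PR r M) = [] ∧ (relF PR r B).length = 1)

/-- The requirements of `R` moved by PropReq into the non-bus child `c`:
`c` is the unique related non-bus cluster. -/
noncomputable def toNonbus (PR : I → J → Prop) (M : List (MLC I J)) (R : Finset J)
    (c : MLC I J) : Finset J :=
  R.filter fun r => relF PR r M = [c]

/-- The requirements of `R` moved by PropReq into the bus child `c`: no non-bus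
cluster is related and `c` is the unique related bus cluster. -/
noncomputable def toBus (PR : I → J → Prop) (B M : List (MLC I J)) (R : Finset J)
    (c : MLC I J) : Finset J :=
  R.filter fun r => relF PR r M = [] ∧ relF PR r B = [c]

/-- All plant indices involved in some requirement of `R`. -/
noncomputable def involved (PR : I → J → Prop) [Fintype I] (R : Finset J) : Finset I :=
  Finset.univ.filter fun i => ∃ r ∈ R, PR i r

/-- The subroutine PropReq: distributes the requirements of a node over the node
itself and its bus and non-bus children, and returns (as second component) the
accumulator set `P` of all plant indices involved in the requirements that remain. -/
noncomputable def propReq (PR : I → J → Prop) [Fintype I] :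
    MLC I J → MLC I J × Finset I
  | .mk A B M R =>
    (.mk A (B.map fun c => c.setReqs (c.reqs ∪ toBus PR B M R c))
           (M.map fun c => c.setReqs (c.reqs ∪ toNonbus PR M R c))
           (stayReqs PR B M R),
     involved PR (stayReqs PR B M R))

/-- The output tree of TransformCtoT: each node carries the element set of the
corresponding cluster together with its synthesis subproblem, i.e. a set of plant
indices and a set of requirement indices. -/
inductive SPTree (I J : Type) : Type where
  | mk : Finset I → Finset I → Finset J → List (SPTree I J) → SPTree I J

namespace SPTree

/-- Element set of the cluster corresponding to an output node. -/
def elemsS : SPTree I J → Finset I | mk A _ _ _ => A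
/-- Plant index set of the synthesis subproblem of an output node. -/
def plants : SPTree I J → Finset I | mk _ P _ _ => P
/-- Requirement index set of the synthesis subproblem of an output node. -/
def sreqs : SPTree I J → Finset J | mk _ _ R _ => R
/-- Children of an output node. -/
def chs : SPTree I J → List (SPTree I J) | mk _ _ _ cs => cs

end SPTree

/-- TransformCtoT (with the requirements pushed down by the parent passed as the
extra argument `Rin`): at a leaf it outputs the subproblem consisting of the leaf's
element together with all plants involved in its requirements; at an internal node
it performs PropReq, keeps the remaining requirements together with the plants they
involve, and recursively processes every bus child and every non-bus child with the
requirement sets moved into them. -/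
noncomputable def transform (PR : I → J → Prop) [Fintype I] :
    MLC I J → Finset J → SPTree I J
  | .mk A B M R, Rin =>
    if B ++ M = [] then
      SPTree.mk A (A ∪ involved PR (R ∪ Rin)) (R ∪ Rin) []
    else
      SPTree.mk A (involved PR (stayReqs PR B M (R ∪ Rin)))
        (stayReqs PR B M (R ∪ Rin))
        ((B.attach.map fun ⟨c, _hc⟩ => transform PR c (toBus PR B M (R ∪ Rin) c)) ++
         (M.attach.map fun ⟨c, _hc⟩ => transform PR c (toNonbus PR M (R ∪ Rin) c)))

mutual
/-- Number of occurrences of requirement index `j` among the requirement sets of the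
nodes of a multilevel clustering. -/
noncomputable def reqCountM (j : J) : MLC I J → ℕ
  | .mk _ B M R => (if j ∈ R then 1 else 0) + reqCountL j B + reqCountL j M
noncomputable def reqCountL (j : J) : List (MLC I J) → ℕ
  | [] => 0
  | c :: cs => reqCountM j c + reqCountL j cs
end

mutual
/-- Number of occurrences of requirement index `j` among the requirement sets of the
synthesis subproblems of the nodes of an output tree. -/
noncomputable def reqCountS (j : J) : SPTree I J → ℕ
  | .mk _ _ R cs => (if j ∈ R then 1 else 0) + reqCountSL j cs
noncomputable def reqCountSL (j : J) : List (SPTree I J) → ℕ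
  | [] => 0
  | c :: cs => reqCountS j c + reqCountSL j cs
end

mutual
/-- The list of all nodes of an output tree. -/
def allNodes : SPTree I J → List (SPTree I J)
  | .mk A P R cs => .mk A P R cs :: allNodesL cs
def allNodesL : List (SPTree I J) → List (SPTree I J)
  | [] => []
  | c :: cs => allNodes c ++ allNodesL cs
end

mutual
/-- All requirement sets in a multilevel clustering are empty. -/
def allReqsEmpty : MLC I J → Prop
  | .mk _ B M R => R = ∅ ∧ allReqsEmptyL B ∧ allReqsEmptyL M
def allReqsEmptyL : List (MLC I J) → Prop
  | [] => True
  | c :: cs => allReqsEmpty c ∧ allReqsEmptyL cs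
end

mutual
/-- The list of leaves of a multilevel clustering. -/
def leaves : MLC I J → List (MLC I J)
  | .mk A [] [] R => [.mk A [] [] R]
  | .mk _ B M _ => leavesL B ++ leavesL M
def leavesL : List (MLC I J) → List (MLC I J)
  | [] => []
  | c :: cs => leaves c ++ leavesL cs
end

/-- `callRel u v` holds iff, when TransformCtoT is run on the (well-formed) internal
node `v`, it performs a recursive call on `u`, i.e. `u` is one of the bus or non-bus
children of `v` with an updated requirement set. -/
def callRel (u v : MLC I J) : Prop :=
  MLC.WF v ∧ v.children ≠ [] ∧ ∃ c ∈ v.children, ∃ R' : Finset J, u = c.setReqs R'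

/-! Validity is local to a node: TransformCtoT puts into the plant set of a node every
plant involved in a requirement it keeps there. Since every node of the output is the root
of the output of TransformCtoT on some subcluster, it suffices to check this at the root. -/

def IsValidSubproblem (PR : I → J → Prop) (n : SPTree I J) : Prop :=
  ∀ r ∈ n.sreqs, ∀ i : I, PR i r → i ∈ n.plants

theorem mem_involved [Fintype I] {PR : I → J → Prop} {R : Finset J} {r : J} {i : I}
    (hr : r ∈ R) (hi : PR i r) : i ∈ involved PR R := by
  simpa [involved] using ⟨r, hr, hi⟩

theorem isValidSubproblem_transform [Fintype I] (PR : I → J → Prop) (t : MLC I J)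
    (Rin : Finset J) : IsValidSubproblem PR (transform PR t Rin) := by
  obtain ⟨A, B, M, R⟩ := t
  intro r hr i hi
  rw [transform] at hr ⊢
  split_ifs at hr ⊢
  · exact Finset.mem_union_right _ (mem_involved hr hi)
  · exact mem_involved hr hi

theorem allNodesL_eq_flatMap (cs : List (SPTree I J)) : allNodesL cs = cs.flatMap allNodes := by
  induction cs with
  | nil => rfl
  | cons c cs ih => rw [allNodesL, ih, List.flatMap_cons]

theorem mem_allNodes {n T : SPTree I J} :
    n ∈ allNodes T ↔ n = T ∨ ∃ c ∈ T.chs, n ∈ allNodes c := by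
  obtain ⟨A, P, R, cs⟩ := T
  rw [allNodes, List.mem_cons, allNodesL_eq_flatMap, List.mem_flatMap, SPTree.chs]

theorem exists_eq_transform_of_mem_chs_transform [Fintype I] {PR : I → J → Prop}
    {A : Finset I} {B M : List (MLC I J)} {R Rin : Finset J} {d : SPTree I J}
    (hd : d ∈ (transform PR (.mk A B M R) Rin).chs) :
    ∃ c ∈ B ++ M, ∃ Rc : Finset J, d = transform PR c Rc := by
  rw [transform] at hd
  split_ifs at hd
  · simp [SPTree.chs] at hd
  simp only [SPTree.chs, List.mem_append, List.mem_map, List.mem_attach, true_and,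
    Subtype.exists] at hd
  rcases hd with ⟨c, hc, rfl⟩ | ⟨c, hc, rfl⟩
  exacts [⟨c, List.mem_append_left _ hc, _, rfl⟩, ⟨c, List.mem_append_right _ hc, _, rfl⟩]

theorem exists_eq_transform_of_mem_allNodes [Fintype I] (PR : I → J → Prop) :
    ∀ (t : MLC I J) (Rin : Finset J), ∀ n ∈ allNodes (transform PR t Rin),
      ∃ (c : MLC I J) (Rc : Finset J), n = transform PR c Rc
  | .mk A B M R, Rin, n, hn => by
    rcases mem_allNodes.1 hn with rfl | ⟨d, hd, hnd⟩
    · exact ⟨_, Rin, rfl⟩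
    obtain ⟨c, hc, Rc, rfl⟩ := exists_eq_transform_of_mem_chs_transform hd
    exact exists_eq_transform_of_mem_allNodes PR c Rc n hnd
termination_by t => t
decreasing_by
  rcases List.mem_append.1 hc with hc | hc <;>
  · have := List.sizeOf_lt_of_mem hc
    simp only [MLC.mk.sizeOf_spec]
    omega

/-- Valid synthesis problem: Let `f` be the output of TransformCtoT on
a well-formed multilevel clustering with local buses over finite index sets `I` and
`J`, invoked with the full requirement index set `J` at the root and empty
requirement sets at all other nodes. Then every node of the output tree represents a
valid synthesis problem: whenever its subproblem `(P, R')` contains a requirement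
index `r ∈ R'`, every plant index `i` with `PR i r` belongs to `P`. -/
theorem transform_valid {I J : Type} [Fintype I] [Fintype J] (PR : I → J → Prop)
    (t : MLC I J) (hwf : MLC.WF t)
    (hroot : t.reqs = (Finset.univ : Finset J))
    (hdesc : ∀ c ∈ t.children, allReqsEmpty c) :
    ∀ n ∈ allNodes (transform PR t ∅),
      ∀ r ∈ n.sreqs, ∀ i : I, PR i r → i ∈ n.plants := by
  intro n hn
  obtain ⟨c, Rc, rfl⟩ := exists_eq_transform_of_mem_allNodes PR t ∅ n hn
  exact isValidSubproblem_transform PR c Rc
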